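/- arXiv:0911.2907 — 2 statements merged into one kernel-verified Lean document; each statement's English description precedes it below -/
import Mathlib

section
/- Define B_n, the set of normalized standard signatures over a field F, as the set of functions {0,1}^n → F of the form x ↦ Pf(M_x) for some n×n strongly skew-symmetric matrix M. Then B_{n+1} = { f : {0,1}^{n+1} → F | f̲_0 ∈ B_n and f̲_1 lies in the span of the shift basis functions s_1^{f̲_0},…,s_n^{f̲_0} with base point 0…0 }. -/
/-!
Write `x = (y, b)`. For `b = 0` the index set of `M_x` lies in the first `n` coordinates, so
`f̲_0` is the sub-Pfaffian function of the top-left `n × n` block `M'` of `M`. For `b = 1`,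
expanding `Pf(M_x)` along its last row gives
`∑_{i ∈ supp y} (-1)^{#{j ∈ supp y | j < i}} M_{i,n+1} Pf(M'_{y + e_i})`,
which is `∑_i M_{i,n+1} s_i^{f̲_0}(y)`; so `f̲_1` is in the span, with coefficients the last
column of `M`. Conversely, given `f̲_0 = Pf(M'_·)` and coefficients `c`, bordering `M'` by
the column `c` and the row `-c` gives a strongly skew-symmetric matrix whose sub-Pfaffian
function is `f`.
-/

open Finset

/-- Bitwise XOR of bit strings. -/
def bxor {n : ℕ} (x y : Fin n → Bool) : Fin n → Bool := fun i => xor (x i) (y i)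

/-- The standard unit bit string `e i`. -/
def eVec {n : ℕ} (i : Fin n) : Fin n → Bool := fun j => decide (j = i)

/-- Hamming weight of a bit string. -/
def wt {n : ℕ} (x : Fin n → Bool) : ℕ := (Finset.univ.filter (fun i => x i = true)).card

/-- Partial Hamming weight `|x|_1^{i-1}`: number of ones strictly below position `i`. -/
def pwt {n : ℕ} (x : Fin n → Bool) (i : Fin n) : ℕ :=
  (Finset.univ.filter (fun j => j < i ∧ x j = true)).card

/-- The shift basis functions `s_i^f` with base point `xh`. -/
def shiftBasis {F : Type*} [Field F] {n : ℕ} (f : (Fin n → Bool) → F) (xh : Fin n → Bool)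
    (i : Fin n) : (Fin n → Bool) → F := fun x =>
  if x i = xh i then 0 else (-1 : F) ^ (pwt (bxor x xh) i) * f (bxor x (eVec i))

/-- The Pfaffian of an `n × n` matrix, defined by recursive expansion along the last
row/column (agreeing with the usual sum over pairings for strongly skew-symmetric matrices). -/
def pf {R : Type*} [CommRing R] : (n : ℕ) → Matrix (Fin n) (Fin n) R → R
  | 0, _ => 1
  | 1, _ => 0
  | n+2, M => ∑ i : Fin (n+1),
      (-1 : R) ^ (i : ℕ) * M i.castSucc (Fin.last (n+1)) *
        pf n (M.submatrix (fun j => (i.succAbove j).castSucc)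
          (fun j => (i.succAbove j).castSucc))

/-- The sub-Pfaffian `Pf(M_x)`: Pfaffian of the principal submatrix of `M` keeping
row and column `i` exactly when `x i = true`. -/
def subPf {R : Type*} [CommRing R] {n : ℕ} (M : Matrix (Fin n) (Fin n) R)
    (x : Fin n → Bool) : R :=
  let s : Finset (Fin n) := Finset.univ.filter (fun i => x i = true)
  pf s.card (M.submatrix (fun j => s.orderEmbOfFin rfl j) (fun j => s.orderEmbOfFin rfl j))

/-- A matrix is strongly skew-symmetric if `Mᵀ = -M` and all diagonal entries vanish. -/
def StronglySkew {R : Type*} [CommRing R] {n : ℕ} (M : Matrix (Fin n) (Fin n) R) : Prop :=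
  (∀ i j, M j i = -M i j) ∧ ∀ i, M i i = 0

/-- `f` is an `n`-bit standard signature over `F`: it is identically zero, or a
translation and nonzero scaling of a sub-Pfaffian function `x ↦ Pf(M_x)` of a
strongly skew-symmetric matrix. -/
def IsStdSig {F : Type*} [Field F] {n : ℕ} (f : (Fin n → Bool) → F) : Prop :=
  (∀ x, f x = 0) ∨
  ∃ (β : F) (xh : Fin n → Bool) (M : Matrix (Fin n) (Fin n) F),
    β ≠ 0 ∧ StronglySkew M ∧ ∀ x, f x = β * subPf M (bxor x xh)

/-- Strictly even parity standard signatures (the set `A_n^{even}`). -/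
def IsEvenSig {F : Type*} [Field F] {n : ℕ} (f : (Fin n → Bool) → F) : Prop :=
  IsStdSig f ∧ (∃ x, f x ≠ 0) ∧ ∀ x, Odd (wt x) → f x = 0

/-- Strictly odd parity standard signatures (the set `A_n^{odd}`). -/
def IsOddSig {F : Type*} [Field F] {n : ℕ} (f : (Fin n → Bool) → F) : Prop :=
  IsStdSig f ∧ (∃ x, f x ≠ 0) ∧ ∀ x, Even (wt x) → f x = 0

/-- `B_n`: the set of normalized standard signatures, i.e. sub-Pfaffian functions. -/
def Bset (F : Type*) [Field F] (n : ℕ) : Set ((Fin n → Bool) → F) :=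
  {f | ∃ M : Matrix (Fin n) (Fin n) F, StronglySkew M ∧ ∀ x, f x = subPf M x}

section PfOn
variable {R : Type*} [CommRing R] {m : ℕ}

def pfOn (s : Finset (Fin m)) (M : Matrix (Fin m) (Fin m) R) : R :=
  pf #s (M.submatrix (s.orderEmbOfFin rfl) (s.orderEmbOfFin rfl))

lemma pf_submatrix_eq_pfOn {k : ℕ} (s : Finset (Fin m)) (h : #s = k)
    (M : Matrix (Fin m) (Fin m) R) {f : Fin k → Fin m} (hf : ∀ i, f i ∈ s)
    (hmono : StrictMono f) : pf k (M.submatrix f f) = pfOn s M := by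
  subst h
  rw [orderEmbOfFin_unique rfl hf hmono]
  rfl

lemma pfOn_submatrix {k : ℕ} (e : Fin k ↪o Fin m) (s : Finset (Fin k))
    (M : Matrix (Fin m) (Fin m) R) :
    pfOn s (M.submatrix e e) = pfOn (s.map e.toEmbedding) M := by
  rw [pfOn, Matrix.submatrix_submatrix]
  exact pf_submatrix_eq_pfOn _ (card_map _) M
    (fun i => mem_map_of_mem _ (orderEmbOfFin_mem s rfl i))
    (e.strictMono.comp (s.orderEmbOfFin rfl).strictMono)

lemma card_filter_lt_orderEmbOfFin {α : Type*} [LinearOrder α] (t : Finset α) {k : ℕ}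
    (h : #t = k) (i : Fin k) : #(t.filter (· < t.orderEmbOfFin h i)) = i := by
  set e := t.orderEmbOfFin h
  have ht : t = univ.map e.toEmbedding := (t.map_orderEmbOfFin_univ h).symm
  rw [ht, filter_map, card_map]
  simp [e.lt_iff_lt, filter_gt_eq_Iio]

lemma strictMono_snoc {α : Type*} [Preorder α] {k : ℕ} {f : Fin k → α} (hf : StrictMono f)
    {a : α} (ha : ∀ i, f i < a) : StrictMono (Fin.snoc f a : Fin (k + 1) → α) := by
  intro i j hij
  obtain ⟨i, rfl⟩ := Fin.exists_castSucc_eq.2 (Fin.ne_last_of_lt hij)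
  induction j using Fin.lastCases with
  | last => simpa using ha i
  | cast j => simpa using hf (Fin.castSucc_lt_castSucc_iff.1 hij)

lemma pfOn_insert_last (M : Matrix (Fin (m + 1)) (Fin (m + 1)) R) {t : Finset (Fin (m + 1))}
    (ht : Fin.last m ∉ t) :
    pfOn (insert (Fin.last m) t) M =
      ∑ a ∈ t, (-1 : R) ^ #(t.filter (· < a)) * M a (Fin.last m) * pfOn (t.erase a) M := by
  obtain ⟨k, hk⟩ : ∃ k, #t = k := ⟨_, rfl⟩
  set e := t.orderEmbOfFin hk
  have he : univ.map e.toEmbedding = t := t.map_orderEmbOfFin_univ hk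
  have hlast : ∀ i, e i < Fin.last m := fun i =>
    (Fin.le_last _).lt_of_ne (ne_of_mem_of_not_mem (orderEmbOfFin_mem t hk i) ht)
  have hmem : ∀ i, (Fin.snoc e (Fin.last m) : Fin (k + 1) → Fin (m + 1)) i ∈
      insert (Fin.last m) t := by
    intro i
    induction i using Fin.lastCases with
    | last => simp
    | cast i => simp [e, orderEmbOfFin_mem]
  rw [← pf_submatrix_eq_pfOn _ (by rw [card_insert_of_notMem ht, hk]) M hmem
    (strictMono_snoc e.strictMono hlast), ← he, sum_map, he]
  cases k with
  | zero => simp [pf]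
  | succ k =>
    refine sum_congr rfl fun i _ => ?_
    have hminor :
        pf k (M.submatrix (e ∘ i.succAbove) (e ∘ i.succAbove)) = pfOn (t.erase (e i)) M :=
      pf_submatrix_eq_pfOn _ (by rw [card_erase_of_mem (orderEmbOfFin_mem t _ i), hk]; rfl) M
        (fun j => mem_erase.2 ⟨e.injective.ne (Fin.succAbove_ne i j), orderEmbOfFin_mem t _ _⟩)
        (e.strictMono.comp (Fin.strictMono_succAbove i))
    have hcount : #(t.filter (· < e i)) = i := card_filter_lt_orderEmbOfFin t hk i
    rw [RelEmbedding.coe_toEmbedding, hcount, ← hminor]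
    simp [Function.comp_def]

end PfOn

section BitStrings
variable {n : ℕ}

def supp (x : Fin n → Bool) : Finset (Fin n) :=
  univ.filter (fun i => x i = true)

lemma supp_snoc_false (y : Fin n → Bool) :
    supp (Fin.snoc y false : Fin (n + 1) → Bool) = (supp y).map Fin.castSuccEmb := by
  ext i
  induction i using Fin.lastCases with
  | last => simp [supp, (Fin.castSucc_lt_last _).ne]
  | cast i => simp [supp]

lemma supp_snoc_true (y : Fin n → Bool) :
    supp (Fin.snoc y true : Fin (n + 1) → Bool) =
      insert (Fin.last n) ((supp y).map Fin.castSuccEmb) := by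
  ext i
  induction i using Fin.lastCases with
  | last => simp [supp]
  | cast i => simp [supp, (Fin.castSucc_lt_last _).ne]

lemma supp_bxor_eVec {y : Fin n → Bool} {i : Fin n} (hi : y i = true) :
    supp (bxor y (eVec i)) = (supp y).erase i := by
  ext j
  rcases eq_or_ne j i with rfl | hj
  · simp [supp, bxor, eVec, hi]
  · simp [supp, bxor, eVec, hj]

lemma bxor_false (y : Fin n → Bool) : bxor y (fun _ => false) = y := by
  funext i; simp [bxor]

lemma pwt_eq_card_filter_supp (y : Fin n → Bool) (i : Fin n) :
    pwt y i = #((supp y).filter (· < i)) := by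
  simp only [pwt, supp, filter_filter, and_comm]

end BitStrings

section SubPf
variable {n : ℕ}

lemma subPf_eq_pfOn {R : Type*} [CommRing R] (M : Matrix (Fin n) (Fin n) R)
    (x : Fin n → Bool) : subPf M x = pfOn (supp x) M := rfl

lemma subPf_snoc_false {R : Type*} [CommRing R] (M : Matrix (Fin (n + 1)) (Fin (n + 1)) R)
    (y : Fin n → Bool) :
    subPf M (Fin.snoc y false) = subPf (M.submatrix Fin.castSucc Fin.castSucc) y := by
  rw [subPf_eq_pfOn, subPf_eq_pfOn, supp_snoc_false]
  exact (pfOn_submatrix Fin.castSuccOrderEmb (supp y) M).symm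

lemma subPf_snoc_true {F : Type*} [Field F] (M : Matrix (Fin (n + 1)) (Fin (n + 1)) F)
    (y : Fin n → Bool) :
    subPf M (Fin.snoc y true) = ∑ i : Fin n, M i.castSucc (Fin.last n) *
      shiftBasis (subPf (M.submatrix Fin.castSucc Fin.castSucc)) (fun _ => false) i y := by
  have hlast : Fin.last n ∉ (supp y).map Fin.castSuccEmb := by
    simp [(Fin.castSucc_lt_last _).ne]
  rw [subPf_eq_pfOn, supp_snoc_true, pfOn_insert_last _ hlast, sum_map,
    ← sum_subset (subset_univ (supp y))]
  · refine sum_congr rfl fun i hi => ?_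
    have hyi : y i = true := by simpa [supp] using hi
    have hcount : #(((supp y).map Fin.castSuccEmb).filter (· < Fin.castSuccEmb i)) = pwt y i := by
      rw [filter_map, card_map, pwt_eq_card_filter_supp]
      rfl
    have hminor : pfOn (((supp y).map Fin.castSuccEmb).erase (Fin.castSuccEmb i)) M =
        subPf (M.submatrix Fin.castSucc Fin.castSucc) (bxor y (eVec i)) := by
      rw [← map_erase, subPf_eq_pfOn, supp_bxor_eVec hyi]
      exact (pfOn_submatrix Fin.castSuccOrderEmb _ M).symm
    rw [hcount, hminor, Fin.castSuccEmb_apply]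
    simp [shiftBasis, hyi, bxor_false]
    ring
  · intro i _ hi
    have hyi : y i = false := by simpa [supp] using hi
    simp [shiftBasis, hyi]

end SubPf

section SkewBorder
variable {R : Type*} [CommRing R] {n : ℕ}

lemma StronglySkew.submatrix {M : Matrix (Fin n) (Fin n) R} (hM : StronglySkew M) {k : ℕ}
    (e : Fin k → Fin n) : StronglySkew (M.submatrix e e) :=
  ⟨fun i j => hM.1 (e i) (e j), fun i => hM.2 (e i)⟩

def skewBorder (M : Matrix (Fin n) (Fin n) R) (c : Fin n → R) :
    Matrix (Fin (n + 1)) (Fin (n + 1)) R :=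
  Fin.lastCases (Fin.lastCases 0 (-c)) fun i => Fin.lastCases (c i) (M i)

@[simp]
lemma skewBorder_castSucc_castSucc (M : Matrix (Fin n) (Fin n) R) (c : Fin n → R) (i j : Fin n) :
    skewBorder M c i.castSucc j.castSucc = M i j := by
  simp [skewBorder]

@[simp]
lemma skewBorder_castSucc_last (M : Matrix (Fin n) (Fin n) R) (c : Fin n → R) (i : Fin n) :
    skewBorder M c i.castSucc (Fin.last n) = c i := by
  simp [skewBorder]

@[simp]
lemma skewBorder_last_castSucc (M : Matrix (Fin n) (Fin n) R) (c : Fin n → R) (j : Fin n) :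
    skewBorder M c (Fin.last n) j.castSucc = -c j := by
  simp [skewBorder]

@[simp]
lemma skewBorder_last_last (M : Matrix (Fin n) (Fin n) R) (c : Fin n → R) :
    skewBorder M c (Fin.last n) (Fin.last n) = 0 := by
  simp [skewBorder]

lemma submatrix_castSucc_skewBorder (M : Matrix (Fin n) (Fin n) R) (c : Fin n → R) :
    (skewBorder M c).submatrix Fin.castSucc Fin.castSucc = M := by
  ext i j
  simp

lemma StronglySkew.skewBorder {M : Matrix (Fin n) (Fin n) R} (hM : StronglySkew M)
    (c : Fin n → R) : StronglySkew (skewBorder M c) := by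
  refine ⟨fun i j => ?_, fun i => ?_⟩
  · induction i using Fin.lastCases <;> induction j using Fin.lastCases
    case cast.cast i j => simpa using hM.1 i j
    all_goals simp
  · induction i using Fin.lastCases <;> simp [hM.2]

end SkewBorder

/-- recursive characterization of the normalized standard signatures:
`f ∈ B_{n+1}` iff `f̲_0 ∈ B_n` and `f̲_1` lies in the span of the shift basis
functions of `f̲_0` at base point `0⋯0`. -/
theorem Bset_recursion {F : Type*} [Field F] {n : ℕ} :
    Bset F (n+1) = {f : (Fin (n+1) → Bool) → F |
      (fun y => f (Fin.snoc y false)) ∈ Bset F n ∧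
      ∃ c : Fin n → F, ∀ y : Fin n → Bool,
        f (Fin.snoc y true) =
          ∑ i : Fin n, c i * shiftBasis (fun z => f (Fin.snoc z false))
            (fun _ => false) i y} := by
  ext f
  constructor
  · rintro ⟨M, hM, hf⟩
    have hf₀ : (fun y => f (Fin.snoc y false)) = subPf (M.submatrix Fin.castSucc Fin.castSucc) :=
      funext fun y => by rw [hf, subPf_snoc_false]
    refine ⟨⟨_, hM.submatrix _, congrFun hf₀⟩, fun i => M i.castSucc (Fin.last n),
      fun y => ?_⟩
    rw [hf, hf₀, subPf_snoc_true]
  · rintro ⟨⟨M, hM, hf₀⟩, c, hf₁⟩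
    replace hf₀ : (fun y => f (Fin.snoc y false)) = subPf M := funext hf₀
    refine ⟨skewBorder M c, hM.skewBorder c, fun x => ?_⟩
    rw [← Fin.snoc_init_self x]
    cases x (Fin.last n)
    · rw [subPf_snoc_false, submatrix_castSucc_skewBorder]
      exact congrFun hf₀ _
    · rw [hf₁, hf₀, subPf_snoc_true, submatrix_castSucc_skewBorder]
      simp only [skewBorder_castSucc_last]
end

section
/- Flipping a fixed input bit gives a bijection between strictly even and strictly odd n-bit standard signatures: for fixed i, the map f ↦ (x ↦ f(x + e_i)) is an involution on the set of n-bit standard signatures that exchanges A_n^{even} and A_n^{odd}. Hence |A_n^{even}| = |A_n^{odd}|. -/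
open Finset

/-! Translating the input by `e i` only moves the base point `xh` of a standard signature
`β * Pf(M_{x + xh})`, and it changes the Hamming weight by exactly one, so it swaps the two
parity conditions. Being an involution, it is a bijection between `A_n^{even}` and `A_n^{odd}`. -/

lemma bxor_assoc {n : ℕ} (x y z : Fin n → Bool) : bxor (bxor x y) z = bxor x (bxor y z) := by
  funext j
  exact Bool.xor_assoc (x j) (y j) (z j)

lemma bxor_bxor_cancel_right {n : ℕ} (x y : Fin n → Bool) : bxor (bxor x y) y = x := by
  funext j
  simp [bxor]

lemma wt_bxor_eVec_of_eq_false {n : ℕ} {x : Fin n → Bool} {i : Fin n} (hx : x i = false) :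
    wt (bxor x (eVec i)) = wt x + 1 := by
  have hsupp : univ.filter (fun j => bxor x (eVec i) j = true) =
      insert i (univ.filter (fun j => x j = true)) := by
    ext j
    by_cases hj : j = i
    · subst hj; simp [bxor, eVec, hx]
    · simp [bxor, eVec, hj]
  rw [wt, wt, hsupp, card_insert_of_notMem (by simp [hx])]

lemma wt_bxor_eVec_eq_succ_or_succ_eq {n : ℕ} (x : Fin n → Bool) (i : Fin n) :
    wt (bxor x (eVec i)) = wt x + 1 ∨ wt x = wt (bxor x (eVec i)) + 1 := by
  cases hx : x i
  · exact Or.inl (wt_bxor_eVec_of_eq_false hx)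
  · right
    have hflip : bxor x (eVec i) i = false := by simp [bxor, eVec, hx]
    simpa only [bxor_bxor_cancel_right] using wt_bxor_eVec_of_eq_false hflip

lemma even_wt_bxor_eVec_iff {n : ℕ} (x : Fin n → Bool) (i : Fin n) :
    Even (wt (bxor x (eVec i))) ↔ Odd (wt x) := by
  rcases wt_bxor_eVec_eq_succ_or_succ_eq x i with h | h <;> rw [h] <;>
    simp [Nat.even_add_one, Nat.odd_add_one]

lemma odd_wt_bxor_eVec_iff {n : ℕ} (x : Fin n → Bool) (i : Fin n) :
    Odd (wt (bxor x (eVec i))) ↔ Even (wt x) := by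
  rw [← Nat.not_even_iff_odd, even_wt_bxor_eVec_iff, Nat.not_odd_iff_even]

section FlipBit

variable {α F : Type*} [Field F] {n : ℕ}

def flipBit (i : Fin n) (f : (Fin n → Bool) → α) : (Fin n → Bool) → α :=
  fun x => f (bxor x (eVec i))

lemma flipBit_apply (i : Fin n) (f : (Fin n → Bool) → α) (x : Fin n → Bool) :
    flipBit i f x = f (bxor x (eVec i)) :=
  rfl

lemma flipBit_involutive (i : Fin n) : Function.Involutive (flipBit (α := α) i) := fun f => by
  funext x
  rw [flipBit_apply, flipBit_apply, bxor_bxor_cancel_right]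

lemma IsStdSig.flipBit {f : (Fin n → Bool) → F} (hf : IsStdSig f) (i : Fin n) :
    IsStdSig (flipBit i f) := by
  rcases hf with hzero | ⟨β, xh, M, hβ, hM, hf⟩
  · exact Or.inl fun x => hzero _
  · exact Or.inr ⟨β, bxor (eVec i) xh, M, hβ, hM, fun x => by
      rw [flipBit_apply, hf, bxor_assoc]⟩

lemma exists_flipBit_ne_zero {f : (Fin n → Bool) → F} (hf : ∃ x, f x ≠ 0) (i : Fin n) :
    ∃ x, flipBit i f x ≠ 0 := by
  obtain ⟨x, hx⟩ := hf
  exact ⟨bxor x (eVec i), by rwa [flipBit_apply, bxor_bxor_cancel_right]⟩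

lemma IsEvenSig.flipBit {f : (Fin n → Bool) → F} (hf : IsEvenSig f) (i : Fin n) :
    IsOddSig (flipBit i f) :=
  ⟨hf.1.flipBit i, exists_flipBit_ne_zero hf.2.1 i,
    fun x hx => hf.2.2 _ ((odd_wt_bxor_eVec_iff x i).2 hx)⟩

lemma IsOddSig.flipBit {f : (Fin n → Bool) → F} (hf : IsOddSig f) (i : Fin n) :
    IsEvenSig (flipBit i f) :=
  ⟨hf.1.flipBit i, exists_flipBit_ne_zero hf.2.1 i,
    fun x hx => hf.2.2 _ ((even_wt_bxor_eVec_iff x i).2 hx)⟩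

lemma isEvenSig_iff_isOddSig_flipBit (f : (Fin n → Bool) → F) (i : Fin n) :
    IsEvenSig f ↔ IsOddSig (flipBit i f) :=
  ⟨fun hf => hf.flipBit i, fun hf => flipBit_involutive i f ▸ hf.flipBit i⟩

end FlipBit

/-- flipping the `i`-th input bit is an involution on the standard
signatures exchanging strictly even and strictly odd signatures; hence
`|A_n^{even}| = |A_n^{odd}|`. -/
theorem flip_bit_bijection {F : Type*} [Field F] {n : ℕ} (i : Fin n) :
    (∀ f : (Fin n → Bool) → F, IsStdSig f → IsStdSig (fun x => f (bxor x (eVec i)))) ∧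
    (∀ (f : (Fin n → Bool) → F) (x : Fin n → Bool),
      f (bxor (bxor x (eVec i)) (eVec i)) = f x) ∧
    (∀ f : (Fin n → Bool) → F,
      IsEvenSig f ↔ IsOddSig (fun x => f (bxor x (eVec i)))) ∧
    Nat.card {f : (Fin n → Bool) → F // IsEvenSig f} =
      Nat.card {f : (Fin n → Bool) → F // IsOddSig f} :=
  ⟨fun _ hf => hf.flipBit i,
    fun f x => congrFun (flipBit_involutive i f) x,
    fun f => isEvenSig_iff_isOddSig_flipBit f i,
    Nat.card_congr <| (flipBit_involutive i).toPerm.subtypeEquiv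
      fun f => isEvenSig_iff_isOddSig_flipBit f i⟩
end
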